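/- arXiv:2503.09353 — 2 statements merged into one kernel-verified Lean document; each statement's English description precedes it below -/
import Mathlib

section
/- For every k ∈ (ZMod 2d)² and every m ∈ (ZMod 2d)², the doubled phase-point operators satisfy the Weyl–Heisenberg covariance relation V(k)·A(m)·V(k)† = A(m + 2k). -/
open scoped BigOperators
open Matrix

noncomputable section

/-- `omega n a = exp(2πi a / n)`, the `n`-th roots of unity raised to integer power `a`. -/
def omega (n : ℕ) (a : ℤ) : ℂ := Complex.exp (2 * Real.pi * Complex.I * a / n)

/-- `Zpow d k = Σ_j ω_d^(k·j) |j⟩⟨j|`, the `k`-th power of the clock operator. -/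
def Zpow (d : ℕ) (k : ℤ) : Matrix (ZMod d) (ZMod d) ℂ :=
  Matrix.of fun i j => if i = j then omega d (k * (j.val : ℤ)) else 0

/-- `Xpow d k = Σ_j |j+k⟩⟨j|`, the `k`-th power of the shift operator. -/
def Xpow (d : ℕ) (k : ℤ) : Matrix (ZMod d) (ZMod d) ℂ :=
  Matrix.of fun i j => if i = j + (k : ZMod d) then 1 else 0

/-- The Weyl–Heisenberg displacement operator `V(k) = ω_{2d}^{-k₁k₂} Z^{k₂} X^{k₁}` for `k ∈ ℤ²`. -/
def Vint (d : ℕ) [NeZero d] (k : ℤ × ℤ) : Matrix (ZMod d) (ZMod d) ℂ :=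
  omega (2 * d) (-(k.1 * k.2)) • (Zpow d k.2 * Xpow d k.1)

/-- The WHDO on the doubled phase space `(ZMod (2d))²`. -/
def V (d : ℕ) [NeZero d] (m : ZMod (2 * d) × ZMod (2 * d)) : Matrix (ZMod d) (ZMod d) ℂ :=
  Vint d ((m.1.val : ℤ), (m.2.val : ℤ))

/-- Discrete parity operator `R = Σ_j |-j⟩⟨j|`. -/
def R (d : ℕ) : Matrix (ZMod d) (ZMod d) ℂ :=
  Matrix.of fun i j => if i = -j then 1 else 0

/-- Doubled phase-point operator `A(m) = V(m)·R`. -/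
def A (d : ℕ) [NeZero d] (m : ZMod (2 * d) × ZMod (2 * d)) : Matrix (ZMod d) (ZMod d) ℂ :=
  V d m * R d

variable (d : ℕ) [NeZero d]

/-- Doubled Wigner transform: `Wig[O](m) = (1/(2d)) Tr(A(m)† O)`. -/
def Wig (O : Matrix (ZMod d) (ZMod d) ℂ) (m : ZMod (2 * d) × ZMod (2 * d)) : ℂ :=
  (1 / (2 * (d : ℂ))) * ((A d m)ᴴ * O).trace

/-- Doubled Weyl transform: `Op[f] = (1/2) Σ_m f(m) A(m)`. -/
def OpW (f : ZMod (2 * d) × ZMod (2 * d) → ℂ) : Matrix (ZMod d) (ZMod d) ℂ :=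
  (1 / 2 : ℂ) • ∑ m : ZMod (2 * d) × ZMod (2 * d), f m • A d m

/-- The projector `P = Wig ∘ Op` on functions on the doubled phase space. -/
def P (f : ZMod (2 * d) × ZMod (2 * d) → ℂ) : ZMod (2 * d) × ZMod (2 * d) → ℂ :=
  Wig d (OpW d f)

/-- Inner product on functions on the doubled phase space. -/
def ip (f g : ZMod (2 * d) × ZMod (2 * d) → ℂ) : ℂ :=
  ∑ m : ZMod (2 * d) × ZMod (2 * d), (starRingEnd ℂ) (f m) * g m

/-- Cross-correlation `(f ⋆ g)(m) = Σ_{m'} conj(f m') g(m'+m)`. -/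
def crossCor (f g : ZMod (2 * d) × ZMod (2 * d) → ℂ) (m : ZMod (2 * d) × ZMod (2 * d)) : ℂ :=
  ∑ m' : ZMod (2 * d) × ZMod (2 * d), (starRingEnd ℂ) (f m') * g (m' + m)

/-- The doubling map `ZMod d → ZMod (2d)`, `a ↦ 2a`. -/
def dbl (a : ZMod d) : ZMod (2 * d) := ((2 * a.val : ℕ) : ZMod (2 * d))

/-- The doubling map on the phase space. -/
def dbl2 (α : ZMod d × ZMod d) : ZMod (2 * d) × ZMod (2 * d) := (dbl d α.1, dbl d α.2)

/-- A stencil `M` is valid if its projection `M̄ = P M` is real-valued (M1),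
sums to 1 (M2), and satisfies the autocorrelation condition (M3). -/
def IsValidStencil (M : ZMod (2 * d) × ZMod (2 * d) → ℂ) : Prop :=
  (∀ m, (starRingEnd ℂ) (P d M m) = P d M m) ∧
  (∑ m : ZMod (2 * d) × ZMod (2 * d), P d M m) = 1 ∧
  (∀ α : ZMod d × ZMod d,
    crossCor d (P d M) (P d M) (dbl2 d α) = if α = 0 then 1 else 0)

/-- The `M`-PPO frame generated by a stencil `M`:
`A^M(α) = (1/2) Σ_{m'} M(m') A(m' + 2α)`. -/
def AM (M : ZMod (2 * d) × ZMod (2 * d) → ℂ) (α : ZMod d × ZMod d) :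
    Matrix (ZMod d) (ZMod d) ℂ :=
  (1 / 2 : ℂ) • ∑ m' : ZMod (2 * d) × ZMod (2 * d), M m' • A d (m' + dbl2 d α)

/-- A family of phase-point operators on `(ZMod d)²` is a valid PPO frame if it is
Hermitian (A1), trace-1 (A2), orthogonal (A3), and WHDO-covariant (A4). -/
def IsValidPPOFrame (B : ZMod d × ZMod d → Matrix (ZMod d) (ZMod d) ℂ) : Prop :=
  (∀ α, (B α)ᴴ = B α) ∧
  (∀ α, (B α).trace = 1) ∧
  (∀ α β, ((B α)ᴴ * B β).trace = if α = β then (d : ℂ) else 0) ∧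
  (∀ (k : ℤ × ℤ) (α : ZMod d × ZMod d),
    Vint d k * B α * (Vint d k)ᴴ = B (α + ((k.1 : ZMod d), (k.2 : ZMod d))))

/-- The `M`-Wigner transform: `Wig^M[O](α) = (1/d) Tr(A^M(α)† O)`. -/
def WigM (M : ZMod (2 * d) × ZMod (2 * d) → ℂ) (O : Matrix (ZMod d) (ZMod d) ℂ)
    (α : ZMod d × ZMod d) : ℂ :=
  (1 / (d : ℂ)) * ((AM d M α)ᴴ * O).trace

/-- The `M`-Weyl transform: `Op^M[f] = Σ_α f(α) A^M(α)`. -/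
def OpM (M : ZMod (2 * d) × ZMod (2 * d) → ℂ) (f : ZMod d × ZMod d → ℂ) :
    Matrix (ZMod d) (ZMod d) ℂ :=
  ∑ α : ZMod d × ZMod d, f α • AM d M α

/-- The symplectic discrete Fourier transform. -/
def SDFT (f : ZMod (2 * d) × ZMod (2 * d) → ℂ) (m : ZMod (2 * d) × ZMod (2 * d)) : ℂ :=
  (1 / (2 * (d : ℂ))) * ∑ m' : ZMod (2 * d) × ZMod (2 * d),
    omega (2 * d) (-((m.1.val : ℤ) * (m'.2.val : ℤ) - (m.2.val : ℤ) * (m'.1.val : ℤ))) * f m'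


/-- Coarse-grain-stencil PPO frame: `B(α) = (1/2) Σ_{b∈{0,1}²} A(2α + b)`. -/
def Bcgs (α : ZMod d × ZMod d) : Matrix (ZMod d) (ZMod d) ℂ :=
  (1 / 2 : ℂ) • ∑ b : ZMod 2 × ZMod 2,
    A d (dbl d α.1 + (b.1.val : ZMod (2 * d)), dbl d α.2 + (b.2.val : ZMod (2 * d)))

/-- Momentum basis state `|p⟩ = (1/√d) Σ_j ω_d^{p j} |j⟩`. -/
def pvec (p : ZMod d) : ZMod d → ℂ :=
  fun j => (1 / ((Real.sqrt d : ℝ) : ℂ)) * omega d ((p.val : ℤ) * (j.val : ℤ))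

/-- One-dimensional Dirichlet kernel `K(m) = (1/d) Σ_{t=-(d-1)/2}^{(d-1)/2} ω_{2d}^{t m}`. -/
def Kdir (m : ZMod (2 * d)) : ℂ :=
  (1 / (d : ℂ)) * ∑ t ∈ Finset.Icc (-(((d : ℤ) - 1) / 2)) (((d : ℤ) - 1) / 2),
    omega (2 * d) (t * (m.val : ℤ))

end

section WHCov

lemma whc_omega_add (n : ℕ) (x y : ℤ) : omega n (x + y) = omega n x * omega n y := by
  simp only [omega]
  rw [← Complex.exp_add]
  congr 1
  push_cast
  ring

lemma whc_omega_star (n : ℕ) (x : ℤ) : star (omega n x) = omega n (-x) := by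
  show (starRingEnd ℂ) (omega n x) = omega n (-x)
  simp only [omega]
  rw [← Complex.exp_conj]
  congr 1
  simp only [map_div₀, _root_.map_mul, map_ofNat, Complex.conj_ofReal, Complex.conj_I, map_intCast,
    map_natCast]
  push_cast
  ring

lemma whc_omega_congr (n : ℕ) [NeZero n] {x y : ℤ} (h : (x : ZMod n) = (y : ZMod n)) :
    omega n x = omega n y := by
  have hd : ((n : ℕ) : ℤ) ∣ (y - x) := by
    apply (ZMod.intCast_zmod_eq_zero_iff_dvd _ _).mp
    push_cast
    rw [h]
    ring
  obtain ⟨t, ht⟩ := hd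
  have hy : y = x + (n : ℤ) * t := by omega
  have h1 : omega n ((n : ℤ) * t) = 1 := by
    simp only [omega]
    have hn : (n : ℂ) ≠ 0 := Nat.cast_ne_zero.mpr (NeZero.ne n)
    have harg : 2 * (Real.pi : ℂ) * Complex.I * (((n : ℤ) * t : ℤ) : ℂ) / (n : ℂ)
        = (t : ℂ) * (2 * (Real.pi : ℂ) * Complex.I) := by
      field_simp
      push_cast
      ring
    rw [harg]
    exact Complex.exp_int_mul_two_pi_mul_I t
  rw [hy, whc_omega_add, h1, mul_one]

lemma whc_omega_double (d : ℕ) [NeZero d] (x : ℤ) : omega d x = omega (2 * d) (2 * x) := by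
  simp only [omega]
  congr 1
  have hd : (d : ℂ) ≠ 0 := Nat.cast_ne_zero.mpr (NeZero.ne d)
  field_simp
  push_cast
  ring

lemma whc_ZX_apply (d : ℕ) [NeZero d] (b a : ℤ) (i j : ZMod d) :
    (Zpow d b * Xpow d a) i j =
      if i = j + (a : ZMod d) then omega d (b * (i.val : ℤ)) else 0 := by
  rw [Matrix.mul_apply]
  simp only [Zpow, Xpow, Matrix.of_apply, ite_mul, zero_mul, mul_ite, mul_one, mul_zero,
    Finset.sum_ite_eq', Finset.mem_univ, if_true]
  by_cases h : i = j + (a : ZMod d)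
  · rw [if_pos h, if_pos h, h]
  · rw [if_neg h, if_neg h]

lemma whc_ZXR_apply (d : ℕ) [NeZero d] (e c : ℤ) (i j : ZMod d) :
    (Zpow d e * Xpow d c * R d) i j =
      if i = -j + (c : ZMod d) then omega d (e * (i.val : ℤ)) else 0 := by
  rw [Matrix.mul_apply]
  simp only [whc_ZX_apply, R, Matrix.of_apply, mul_ite, mul_one, mul_zero, ite_mul, zero_mul,
    Finset.sum_ite_eq', Finset.mem_univ, if_true]

lemma whc_ZX_mul_ZXR (d : ℕ) [NeZero d] (b a e c : ℤ) :
    (Zpow d b * Xpow d a) * (Zpow d e * Xpow d c * R d) =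
      omega d (-(a * e)) • (Zpow d (b + e) * Xpow d (a + c) * R d) := by
  ext i j
  rw [Matrix.mul_apply]
  simp only [whc_ZX_apply, whc_ZXR_apply, Matrix.smul_apply, smul_eq_mul, mul_ite, mul_one,
    mul_zero, ite_mul, zero_mul]
  simp only [Finset.sum_ite_eq', Finset.mem_univ, if_true]
  have hcond : -j + ((a + c : ℤ) : ZMod d) = -j + (c : ZMod d) + (a : ZMod d) := by
    push_cast
    ring
  rw [hcond]
  by_cases h : i = -j + (c : ZMod d) + (a : ZMod d)
  · rw [if_pos h, if_pos h, ← whc_omega_add, ← whc_omega_add]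
    apply whc_omega_congr
    push_cast [ZMod.natCast_val, ZMod.cast_id]
    rw [h]
    ring
  · rw [if_neg h, if_neg h]

lemma whc_ZXR_mul_ZX (d : ℕ) [NeZero d] (e c b a : ℤ) :
    (Zpow d e * Xpow d c * R d) * (Zpow d b * Xpow d a) =
      omega d (c * b) • (Zpow d (e - b) * Xpow d (c - a) * R d) := by
  ext i j
  rw [Matrix.mul_apply]
  simp only [whc_ZX_apply, whc_ZXR_apply, Matrix.smul_apply, smul_eq_mul, mul_ite, mul_one,
    mul_zero, ite_mul, zero_mul]
  simp only [Finset.sum_ite_eq', Finset.mem_univ, if_true]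
  have hcond : -j + ((c - a : ℤ) : ZMod d) = -(j + (a : ZMod d)) + (c : ZMod d) := by
    push_cast
    ring
  rw [hcond]
  by_cases h : i = -(j + (a : ZMod d)) + (c : ZMod d)
  · rw [if_pos h, if_pos h, ← whc_omega_add, ← whc_omega_add]
    apply whc_omega_congr
    push_cast [ZMod.natCast_val, ZMod.cast_id]
    rw [h]
    ring
  · rw [if_neg h, if_neg h]

lemma whc_ZX_conjTranspose (d : ℕ) [NeZero d] (b a : ℤ) :
    (Zpow d b * Xpow d a)ᴴ = omega d (-(a * b)) • (Zpow d (-b) * Xpow d (-a)) := by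
  ext i j
  rw [Matrix.conjTranspose_apply]
  simp only [whc_ZX_apply, Matrix.smul_apply, smul_eq_mul]
  by_cases h : j = i + (a : ZMod d)
  · rw [if_pos h, if_pos (show i = j + ((-a : ℤ) : ZMod d) by rw [h]; push_cast; ring)]
    rw [whc_omega_star, ← whc_omega_add]
    apply whc_omega_congr
    push_cast [ZMod.natCast_val, ZMod.cast_id]
    rw [h]
    ring
  · rw [if_neg h, if_neg (fun hh => h (by rw [hh]; push_cast; ring)), star_zero, mul_zero]

lemma whc_ZXR_congr (d : ℕ) [NeZero d] {e c e' c' : ℤ} (he : ((e : ℤ) : ZMod d) = ((e' : ℤ) : ZMod d))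
    (hc : ((c : ℤ) : ZMod d) = ((c' : ℤ) : ZMod d)) :
    Zpow d e * Xpow d c * R d = Zpow d e' * Xpow d c' * R d := by
  ext i j
  rw [whc_ZXR_apply, whc_ZXR_apply, hc]
  by_cases h : i = -j + ((c' : ℤ) : ZMod d)
  · rw [if_pos h, if_pos h]
    apply whc_omega_congr
    push_cast [ZMod.natCast_val, ZMod.cast_id] at he ⊢
    rw [he]
  · rw [if_neg h, if_neg h]

lemma whc_cast_down (d : ℕ) [NeZero d] {x y : ℤ}
    (h : (x : ZMod (2 * d)) = (y : ZMod (2 * d))) : (x : ZMod d) = (y : ZMod d) := by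
  haveI : NeZero (2 * d) := ⟨mul_ne_zero two_ne_zero (NeZero.ne d)⟩
  have h2 : ((2 * d : ℕ) : ℤ) ∣ (y - x) := by
    apply (ZMod.intCast_zmod_eq_zero_iff_dvd _ _).mp
    push_cast
    rw [h]
    ring
  have hdvd : ((d : ℕ) : ℤ) ∣ (y - x) := by
    refine dvd_trans (dvd_mul_left (d : ℤ) 2) ?_
    push_cast at h2
    exact h2
  have h3 : ((y - x : ℤ) : ZMod d) = 0 := (ZMod.intCast_zmod_eq_zero_iff_dvd _ _).mpr hdvd
  push_cast at h3
  linear_combination -h3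

lemma whc_key (d : ℕ) [NeZero d] (a b c e : ℤ) :
    (omega (2 * d) (-(a * b)) • (Zpow d b * Xpow d a)) *
      (omega (2 * d) (-(c * e)) • (Zpow d e * Xpow d c * R d)) *
      (omega (2 * d) (-(a * b)) • (Zpow d b * Xpow d a))ᴴ =
    omega (2 * d) (-((c + 2 * a) * (e + 2 * b))) •
      (Zpow d (e + 2 * b) * Xpow d (c + 2 * a) * R d) := by
  haveI : NeZero (2 * d) := ⟨mul_ne_zero two_ne_zero (NeZero.ne d)⟩
  rw [Matrix.conjTranspose_smul, whc_ZX_conjTranspose d b a, whc_omega_star, neg_neg]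
  simp only [Matrix.smul_mul, Matrix.mul_smul, smul_smul]
  rw [whc_ZX_mul_ZXR d b a e c]
  simp only [Matrix.smul_mul, Matrix.mul_smul, smul_smul]
  rw [whc_ZXR_mul_ZX d (b + e) (a + c) (-b) (-a)]
  simp only [smul_smul]
  rw [show b + e - -b = e + 2 * b from by ring, show a + c - -a = c + 2 * a from by ring]
  congr 1
  rw [whc_omega_double d (-(a * b)), whc_omega_double d (-(a * e)),
    whc_omega_double d ((a + c) * -b)]
  simp only [← whc_omega_add]
  congr 1
  ring

end WHCov

theorem stmt1 (d : ℕ) [NeZero d] (k m : ZMod (2 * d) × ZMod (2 * d)) :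
    V d k * A d m * (V d k)ᴴ = A d (m.1 + 2 * k.1, m.2 + 2 * k.2) := by
  haveI : NeZero (2 * d) := ⟨mul_ne_zero two_ne_zero (NeZero.ne d)⟩
  have hA : ∀ x : ZMod (2 * d) × ZMod (2 * d), A d x
      = omega (2 * d) (-((x.1.val : ℤ) * (x.2.val : ℤ))) •
        (Zpow d (x.2.val : ℤ) * Xpow d (x.1.val : ℤ) * R d) := by
    intro x
    simp only [A, V, Vint, Matrix.smul_mul]
  rw [hA m, hA (m.1 + 2 * k.1, m.2 + 2 * k.2)]
  simp only [V, Vint]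
  rw [whc_key d ((k.1.val : ℤ)) ((k.2.val : ℤ)) ((m.1.val : ℤ)) ((m.2.val : ℤ))]
  have h1 : ((((m.1.val : ℤ) + 2 * (k.1.val : ℤ)) : ℤ) : ZMod (2 * d))
      = ((((m.1 + 2 * k.1).val : ℤ)) : ZMod (2 * d)) := by
    push_cast [ZMod.natCast_val, ZMod.cast_id]
    ring
  have h2 : ((((m.2.val : ℤ) + 2 * (k.2.val : ℤ)) : ℤ) : ZMod (2 * d))
      = ((((m.2 + 2 * k.2).val : ℤ)) : ZMod (2 * d)) := by
    push_cast [ZMod.natCast_val, ZMod.cast_id]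
    ring
  congr 1
  · apply whc_omega_congr
    push_cast [ZMod.natCast_val, ZMod.cast_id]
    ring
  · exact whc_ZXR_congr d (whc_cast_down d h2) (whc_cast_down d h1)
end

section
/- The sum of all Weyl–Heisenberg displacement operators over the doubled phase space equals 2d times the parity operator: Σ_{m∈(ZMod 2d)²} V(m) = 2d·R. -/
open scoped BigOperators
open Matrix

noncomputable section

variable (d : ℕ) [NeZero d]

lemma omega_add (n : ℕ) (a b : ℤ) : omega n (a + b) = omega n a * omega n b := by
  unfold omega
  rw [← Complex.exp_add]
  congr 1
  push_cast
  ring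

lemma omega_zpow (n : ℕ) (a : ℤ) :
    omega n a = (Complex.exp (2 * Real.pi * Complex.I / n)) ^ a := by
  unfold omega
  rw [← Complex.exp_int_mul]
  congr 1
  ring

lemma omega_two_mul (d : ℕ) (hd : (d:ℕ) ≠ 0) (a : ℤ) : omega (2 * d) (2 * a) = omega d a := by
  unfold omega
  congr 1
  have : (d : ℂ) ≠ 0 := by exact_mod_cast hd
  push_cast
  field_simp

lemma sum_zmod_val {n : ℕ} [NeZero n] (f : ℕ → ℂ) :
    ∑ x : ZMod n, f x.val = ∑ t ∈ Finset.range n, f t := by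
  refine Finset.sum_nbij' (fun x => x.val) (fun t => (t : ZMod n)) ?_ ?_ ?_ ?_ ?_
  · intro x _; exact Finset.mem_range.mpr (ZMod.val_lt x)
  · intro t _; exact Finset.mem_univ _
  · intro x _; simp [ZMod.natCast_val]
  · intro t ht; exact ZMod.val_cast_of_lt (Finset.mem_range.mp ht)
  · intro x _; rfl

lemma sum_omega (n : ℕ) [NeZero n] (c : ℤ) :
    ∑ x : ZMod n, omega n ((x.val : ℤ) * c) = if (n : ℤ) ∣ c then (n : ℂ) else 0 := by
  have hn : n ≠ 0 := NeZero.ne n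
  set ζ := Complex.exp (2 * Real.pi * Complex.I / n) with hζdef
  have hζ : IsPrimitiveRoot ζ n := Complex.isPrimitiveRoot_exp n hn
  have hterm : ∀ x : ZMod n, omega n ((x.val : ℤ) * c) = (ζ ^ c) ^ x.val := by
    intro x
    rw [omega_zpow, show (x.val : ℤ) * c = c * x.val from mul_comm _ _,
      _root_.zpow_mul, zpow_natCast]
  simp_rw [hterm]
  rw [sum_zmod_val (fun t => (ζ ^ c) ^ t)]
  by_cases h : (n : ℤ) ∣ c
  · rw [if_pos h]
    have h1 : ζ ^ c = 1 := (hζ.zpow_eq_one_iff_dvd c).mpr h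
    simp [h1]
  · rw [if_neg h]
    have h1 : ζ ^ c ≠ 1 := fun hc => h ((hζ.zpow_eq_one_iff_dvd c).mp hc)
    rw [geom_sum_eq h1]
    have : (ζ ^ c) ^ n = 1 := by
      rw [← zpow_natCast (ζ ^ c) n, ← _root_.zpow_mul, mul_comm, _root_.zpow_mul,
        zpow_natCast, hζ.pow_eq_one, _root_.one_zpow]
    simp [this]

lemma ZX_apply (d : ℕ) [NeZero d] (a b : ℤ) (i j : ZMod d) :
    (Zpow d b * Xpow d a) i j = if i = j + (a : ZMod d) then omega d (b * (i.val : ℤ)) else 0 := by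
  classical
  simp only [Zpow, Xpow, Matrix.mul_apply, Matrix.of_apply, ite_mul, mul_ite, mul_one,
    mul_zero, zero_mul]
  rw [Finset.sum_ite_eq' Finset.univ (j + (a : ZMod d))]
  simp only [Finset.mem_univ, if_true]
  split_ifs with h
  · rw [← h]
  · rfl

lemma natmod_cast (d : ℕ) [NeZero d] (a : ℕ) : ((a % (2 * d) : ℕ) : ZMod d) = (a : ZMod d) := by
  conv_rhs => rw [← Nat.mod_add_div a (2 * d)]
  push_cast
  simp [ZMod.natCast_self]

end

theorem stmt2 (d : ℕ) [NeZero d] :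
    ∑ m : ZMod (2 * d) × ZMod (2 * d), V d m = (2 * (d : ℂ)) • R d := by
  have hd : d ≠ 0 := NeZero.ne d
  have h2d : NeZero (2 * d) := ⟨by omega⟩
  ext i j
  rw [Matrix.sum_apply]
  have hterm : ∀ m : ZMod (2 * d) × ZMod (2 * d), V d m i j =
      (if i = j + ((m.1.val : ℕ) : ZMod d) then (1:ℂ) else 0) *
        omega (2 * d) ((m.2.val : ℤ) * (2 * (i.val : ℤ) - (m.1.val : ℤ))) := by
    intro m
    show (omega (2 * d) _ • (Zpow d _ * Xpow d _)) i j = _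
    rw [Matrix.smul_apply, ZX_apply, smul_eq_mul]
    have hc : (((m.1.val : ℤ)) : ZMod d) = ((m.1.val : ℕ) : ZMod d) := by push_cast; ring
    rw [hc]
    by_cases h : i = j + ((m.1.val : ℕ) : ZMod d)
    · rw [if_pos h, if_pos h, one_mul]
      rw [← omega_two_mul d hd ((m.2.val : ℤ) * (i.val : ℤ)), ← omega_add]
      congr 1; ring
    · rw [if_neg h, if_neg h, mul_zero, zero_mul]
  rw [Finset.sum_congr rfl (fun m _ => hterm m), Fintype.sum_prod_type]
  have hdvd : ∀ m1 : ZMod (2 * d),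
      (((2 * d : ℕ) : ℤ) ∣ (2 * (i.val : ℤ) - (m1.val : ℤ))) ↔
        m1 = ((2 * i.val : ℕ) : ZMod (2 * d)) := by
    intro m1
    rw [← ZMod.intCast_zmod_eq_zero_iff_dvd]
    push_cast
    rw [sub_eq_zero]
    simp [ZMod.natCast_val, ZMod.cast_id, eq_comm]
  have hin : ∀ m1 : ZMod (2 * d),
      ∑ m2 : ZMod (2 * d), (if i = j + ((m1.val : ℕ) : ZMod d) then (1:ℂ) else 0) *
        omega (2 * d) ((m2.val : ℤ) * (2 * (i.val : ℤ) - (m1.val : ℤ))) =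
      (if m1 = ((2 * i.val : ℕ) : ZMod (2 * d)) then ((2 * d : ℕ) : ℂ) else 0) *
        (if i = j + ((m1.val : ℕ) : ZMod d) then (1:ℂ) else 0) := by
    intro m1
    rw [← Finset.mul_sum, sum_omega, if_congr (hdvd m1) rfl rfl, mul_comm]
  rw [Finset.sum_congr rfl (fun m1 _ => hin m1)]
  simp_rw [ite_mul, zero_mul]
  rw [Finset.sum_ite_eq' Finset.univ ((2 * i.val : ℕ) : ZMod (2 * d))]
  have hval : ((((2 * i.val : ℕ) : ZMod (2 * d)).val : ℕ) : ZMod d) = 2 * i := by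
    rw [ZMod.val_natCast, natmod_cast]
    push_cast
    simp [ZMod.natCast_val, ZMod.cast_id]
  have hcond : (i = j + (((( 2 * i.val : ℕ) : ZMod (2 * d)).val : ℕ) : ZMod d)) ↔ i = -j := by
    rw [hval]
    constructor
    · intro h; linear_combination -h
    · intro h; linear_combination -h
  simp only [Finset.mem_univ, if_true]
  rw [if_congr hcond rfl rfl]
  show _ = (2 * (d:ℂ)) • R d i j
  simp only [R, Matrix.smul_apply, Matrix.of_apply, smul_eq_mul]
  split_ifs <;> push_cast <;> ring
end
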